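/- arXiv:1103.2345 — 2 statements merged into one kernel-verified Lean document; each statement's English description precedes it below -/
import Mathlib

section
/- For the semicircle density ρ_sc with parameter w > 0 and any λ ∈ (−2w, 2w), the principal value integral ∫ ρ_sc(μ)/(μ − λ) dμ equals −λ/(2w²). -/
open MeasureTheory intervalIntegral Filter
open scoped Topology

/-- The semicircle density with parameter `w`. -/
noncomputable def rhoSC (w x : ℝ) : ℝ :=
  (2 * Real.pi * w ^ 2)⁻¹ * Real.sqrt (max 0 (4 * w ^ 2 - x ^ 2))

/-!
With `a = 2w`, the function `√(a² - x²) / (x - l)` has on `[-a, a] \ {l}` an explicit primitive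
`G x + √(a² - l²) log |x - l|` with `G` continuous on `[-a, a]`. Since `log |x - l|` is even about
`l`, the singular part cancels between `l - ε` and `l + ε`, so the truncated integrals tend to the
increment of the primitive over `[-a, a]`. At `±a` the square roots vanish and the increment is
`-π l`, which the normalisation `(2π w²)⁻¹` turns into `-l / (2w²)`.
-/

open Set Real

section PrincipalValue

variable {f G : ℝ → ℝ} {a b l C : ℝ}

theorem tendsto_principalValue_of_hasDerivAt_add_mul_log (hal : a < l) (hlb : l < b)
    (hG : ContinuousOn G (Icc a b)) (hf : ContinuousOn f (Icc a b \ {l}))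
    (hderiv : ∀ x ∈ Ioo a b, x ≠ l →
      HasDerivAt (fun y => G y + C * log (y - l)) (f x) x) :
    Tendsto (fun ε => (∫ x in a..(l - ε), f x) + ∫ x in (l + ε)..b, f x) (𝓝[>] 0)
      (𝓝 (G b + C * log (b - l) - (G a + C * log (a - l)))) := by
  set F := fun y => G y + C * log (y - l)
  have integral_eq : ∀ u v, a ≤ u → u ≤ v → v ≤ b → l ∉ Icc u v →
      ∫ x in u..v, f x = F v - F u := by
    intro u v hau huv hvb hl
    have hsub : Icc u v ⊆ Icc a b \ {l} := fun x hx =>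
      ⟨⟨hau.trans hx.1, hx.2.trans hvb⟩, by rintro rfl; exact hl hx⟩
    have hlog : ContinuousOn (fun y => log (y - l)) (Icc u v) :=
      (continuousOn_id.sub continuousOn_const).log fun x hx =>
        sub_ne_zero.2 (by rintro rfl; exact hl hx)
    refine integral_eq_sub_of_hasDerivAt_of_le huv
      ((hG.mono fun x hx => (hsub hx).1).add (continuousOn_const.mul hlog))
      (fun x hx => hderiv x ⟨hau.trans_lt hx.1, hx.2.trans_le hvb⟩
        (by rintro rfl; exact hl (Ioo_subset_Icc_self hx))) ?_
    exact (hf.mono hsub).intervalIntegrable_of_Icc huv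
  have hGl : ContinuousAt G l := hG.continuousAt (Icc_mem_nhds hal hlb)
  have hlim : Tendsto (fun ε => G (l - ε) - G (l + ε) + (F b - F a)) (𝓝[>] 0)
      (𝓝 (F b - F a)) := by
    have hminus : Tendsto (fun ε => G (l - ε)) (𝓝 0) (𝓝 (G l)) :=
      hGl.tendsto.comp (by simpa using (tendsto_id (x := 𝓝 (0 : ℝ))).const_sub l)
    have hplus : Tendsto (fun ε => G (l + ε)) (𝓝 0) (𝓝 (G l)) :=
      hGl.tendsto.comp (by simpa using (tendsto_id (x := 𝓝 (0 : ℝ))).const_add l)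
    simpa using ((hminus.sub hplus).add_const (F b - F a)).mono_left nhdsWithin_le_nhds
  refine hlim.congr' ?_
  filter_upwards [Ioo_mem_nhdsGT (lt_min (sub_pos.2 hal) (sub_pos.2 hlb))] with ε hε
  have hε₀ : 0 < ε := hε.1
  have hε₁ : ε < l - a := hε.2.trans_le (min_le_left _ _)
  have hε₂ : ε < b - l := hε.2.trans_le (min_le_right _ _)
  rw [integral_eq a (l - ε) le_rfl (by linarith) (by linarith) fun h => by linarith [h.2],
    integral_eq (l + ε) b (by linarith) (by linarith) le_rfl fun h => by linarith [h.1]]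
  -- `Real.log` is `log |·|`, so the singular parts of the primitive cancel across `l`
  have hlog : log (l - ε - l) = log (l + ε - l) := by
    rw [show l - ε - l = -(l + ε - l) by ring, log_neg_eq_log]
  simp only [F, hlog]
  ring

end PrincipalValue

section Semicircle

variable {a l x : ℝ}

noncomputable def semicircleDenom (a l x : ℝ) : ℝ :=
  a ^ 2 - l * x + √(a ^ 2 - l ^ 2) * √(a ^ 2 - x ^ 2)

/-- Writing `√(a² - x²) / (x - l) = -(x + l) / √(a² - x²) + (a² - l²) / ((x - l) √(a² - x²))`,
the last term has the primitive `√(a² - l²) log |(x - l) / semicircleDenom a l x|`; this is the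
primitive with its singular part `√(a² - l²) log |x - l|` removed. -/
noncomputable def semicircleRegularPrimitive (a l x : ℝ) : ℝ :=
  √(a ^ 2 - x ^ 2) - l * arcsin (x / a) - √(a ^ 2 - l ^ 2) * log (semicircleDenom a l x)

theorem semicircleDenom_pos (hl : l ∈ Ioo (-a) a) (hx : x ∈ Icc (-a) a) :
    0 < semicircleDenom a l x := by
  have ha : 0 < a := by linarith [hl.1, hl.2]
  have hlx : l * x < a ^ 2 := by
    calc l * x ≤ |l| * |x| := by rw [← abs_mul]; exact le_abs_self _
      _ ≤ |l| * a := mul_le_mul_of_nonneg_left (abs_le.2 hx) (abs_nonneg l)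
      _ < a * a := mul_lt_mul_of_pos_right (abs_lt.2 hl) ha
      _ = a ^ 2 := (sq a).symm
  unfold semicircleDenom
  positivity

theorem continuous_semicircleDenom (a l : ℝ) : Continuous (semicircleDenom a l) := by
  unfold semicircleDenom
  fun_prop

theorem continuousOn_semicircleRegularPrimitive (hl : l ∈ Ioo (-a) a) :
    ContinuousOn (semicircleRegularPrimitive a l) (Icc (-a) a) := by
  have hlog : ContinuousOn (fun x => log (semicircleDenom a l x)) (Icc (-a) a) :=
    (continuous_semicircleDenom a l).continuousOn.log fun x hx => (semicircleDenom_pos hl hx).ne'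
  unfold semicircleRegularPrimitive
  exact (Continuous.continuousOn (by fun_prop)).sub (continuousOn_const.mul hlog)

theorem hasDerivAt_sqrt_sq_sub_sq (hx : x ∈ Ioo (-a) a) :
    HasDerivAt (fun y => √(a ^ 2 - y ^ 2)) (-x / √(a ^ 2 - x ^ 2)) x := by
  have hpos : 0 < a ^ 2 - x ^ 2 := by nlinarith [hx.1, hx.2]
  convert ((hasDerivAt_pow 2 x).const_sub (a ^ 2)).sqrt hpos.ne' using 1
  field_simp
  ring

theorem hasDerivAt_arcsin_div (hx : x ∈ Ioo (-a) a) :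
    HasDerivAt (fun y => arcsin (y / a)) (1 / √(a ^ 2 - x ^ 2)) x := by
  have ha : 0 < a := by linarith [hx.1, hx.2]
  have hpos : 0 < a ^ 2 - x ^ 2 := by nlinarith [hx.1, hx.2]
  have hne₁ : x / a ≠ -1 := by rw [ne_eq, div_eq_iff ha.ne']; linarith [hx.1]
  have hne₂ : x / a ≠ 1 := by rw [ne_eq, div_eq_iff ha.ne']; linarith [hx.2]
  refine ((hasDerivAt_arcsin hne₁ hne₂).comp x ((hasDerivAt_id x).div_const a)).congr_deriv ?_
  have : 1 - (x / a) ^ 2 = (a ^ 2 - x ^ 2) / a ^ 2 := by field_simp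
  rw [this, sqrt_div hpos.le, sqrt_sq ha.le]
  field_simp

theorem hasDerivAt_semicircleRegularPrimitive_add_mul_log (hl : l ∈ Ioo (-a) a)
    (hx : x ∈ Ioo (-a) a) (hxl : x ≠ l) :
    HasDerivAt (fun y => semicircleRegularPrimitive a l y + √(a ^ 2 - l ^ 2) * log (y - l))
      (√(a ^ 2 - x ^ 2) / (x - l)) x := by
  have hq : √(a ^ 2 - x ^ 2) ≠ 0 := (sqrt_pos.2 (by nlinarith [hx.1, hx.2])).ne'
  have hq_sq : √(a ^ 2 - x ^ 2) ^ 2 = a ^ 2 - x ^ 2 := sq_sqrt (by nlinarith [hx.1, hx.2])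
  have hs_sq : √(a ^ 2 - l ^ 2) ^ 2 = a ^ 2 - l ^ 2 := sq_sqrt (by nlinarith [hl.1, hl.2])
  have hD : semicircleDenom a l x ≠ 0 := (semicircleDenom_pos hl (Ioo_subset_Icc_self hx)).ne'
  have hxl' : x - l ≠ 0 := sub_ne_zero.2 hxl
  have hD_deriv : HasDerivAt (semicircleDenom a l)
      (-l + √(a ^ 2 - l ^ 2) * (-x / √(a ^ 2 - x ^ 2))) x :=
    ((((hasDerivAt_id x).const_mul l).const_sub (a ^ 2)).add
      ((hasDerivAt_sqrt_sq_sub_sq hx).const_mul _)).congr_deriv (by ring)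
  have hlog_sub : HasDerivAt (fun y => log (y - l)) (x - l)⁻¹ x := by
    simpa using ((hasDerivAt_id x).sub_const l).log hxl'
  refine ((((hasDerivAt_sqrt_sq_sub_sq hx).sub ((hasDerivAt_arcsin_div hx).const_mul l)).sub
    ((hD_deriv.log hD).const_mul _)).add (hlog_sub.const_mul _)).congr_deriv ?_
  unfold semicircleDenom at hD ⊢
  generalize √(a ^ 2 - x ^ 2) = q at *
  generalize √(a ^ 2 - l ^ 2) = s at *
  replace hD : a ^ 2 - x * l + q * s ≠ 0 := by rwa [mul_comm x l, mul_comm q s]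
  field_simp
  linear_combination (s ^ 2 - q * s - a ^ 2 + x * l) * hq_sq + (a ^ 2 - x * l) * hs_sq

theorem semicircleRegularPrimitive_add_mul_log_sub (hl : l ∈ Ioo (-a) a) :
    semicircleRegularPrimitive a l a + √(a ^ 2 - l ^ 2) * log (a - l)
      - (semicircleRegularPrimitive a l (-a) + √(a ^ 2 - l ^ 2) * log (-a - l)) = -(π * l) := by
  have ha : 0 < a := by linarith [hl.1, hl.2]
  have hD_right : log (semicircleDenom a l a) = log a + log (a - l) := by
    rw [← log_mul ha.ne' (by linarith [hl.2]), semicircleDenom]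
    simp only [sub_self, sqrt_zero, mul_zero, add_zero]
    ring_nf
  have hD_left : log (semicircleDenom a l (-a)) = log a + log (a + l) := by
    rw [← log_mul ha.ne' (by linarith [hl.1]), semicircleDenom]
    simp only [neg_sq, sub_self, sqrt_zero, mul_zero, add_zero]
    ring_nf
  have hlog_left : log (-a - l) = log (a + l) := by
    rw [← log_neg_eq_log, neg_sub', sub_neg_eq_add, neg_neg]
  simp only [semicircleRegularPrimitive, hD_right, hD_left, hlog_left, neg_sq, sub_self, sqrt_zero,
    div_self ha.ne', neg_div, arcsin_one, arcsin_neg_one]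
  ring

end Semicircle

theorem rhoSC_eq (w x : ℝ) : rhoSC w x = (2 * π * w ^ 2)⁻¹ * √((2 * w) ^ 2 - x ^ 2) := by
  rw [rhoSC, mul_pow, show (2 : ℝ) ^ 2 = 4 by norm_num]
  rcases le_total 0 (4 * w ^ 2 - x ^ 2) with h | h
  · rw [max_eq_right h]
  · rw [max_eq_left h, sqrt_zero, sqrt_eq_zero_of_nonpos h]

theorem continuous_rhoSC (w : ℝ) : Continuous (rhoSC w) := by
  unfold rhoSC
  fun_prop

theorem semicircle_principal_value_general (w : ℝ) (l : ℝ)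
    (hl : l ∈ Set.Ioo (-(2 * w)) (2 * w)) :
    Tendsto (fun ε : ℝ =>
        (∫ x in (-(2 * w))..(l - ε), rhoSC w x / (x - l)) +
          ∫ x in (l + ε)..(2 * w), rhoSC w x / (x - l))
      (𝓝[>] 0) (𝓝 (-l / (2 * w ^ 2))) := by
  set c := (2 * π * w ^ 2)⁻¹
  set s := √((2 * w) ^ 2 - l ^ 2)
  have hf : ContinuousOn (fun x => rhoSC w x / (x - l)) (Icc (-(2 * w)) (2 * w) \ {l}) :=
    (continuous_rhoSC w).continuousOn.div (continuousOn_id.sub continuousOn_const)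
      fun x hx => sub_ne_zero.2 hx.2
  have hderiv : ∀ x ∈ Ioo (-(2 * w)) (2 * w), x ≠ l → HasDerivAt
      (fun y => c * semicircleRegularPrimitive (2 * w) l y + c * s * log (y - l))
      (rhoSC w x / (x - l)) x := fun x hx hxl => by
    have h := (hasDerivAt_semicircleRegularPrimitive_add_mul_log hl hx hxl).const_mul c
    simpa only [mul_add, ← mul_assoc] using
      h.congr_deriv (show _ = rhoSC w x / (x - l) by rw [rhoSC_eq]; ring)
  convert tendsto_principalValue_of_hasDerivAt_add_mul_log
    (G := fun x => c * semicircleRegularPrimitive (2 * w) l x) hl.1 hl.2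
    (continuousOn_const.mul (continuousOn_semicircleRegularPrimitive hl)) hf hderiv using 2
  rw [show -l / (2 * w ^ 2) = c * -(π * l) by simp only [c]; field_simp]
  linear_combination (-c) * semicircleRegularPrimitive_add_mul_log_sub hl

/-- The principal value of `∫ ρ_sc(μ)/(μ − λ) dμ` equals `−λ/(2w²)` for `λ ∈ (−2w, 2w)`. -/
theorem semicircle_principal_value (w : ℝ) (hw : 0 < w) (l : ℝ)
    (hl : l ∈ Set.Ioo (-(2 * w)) (2 * w)) :
    Tendsto (fun ε : ℝ =>
        (∫ x in (-(2 * w))..(l - ε), rhoSC w x / (x - l)) +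
          ∫ x in (l + ε)..(2 * w), rhoSC w x / (x - l))
      (𝓝[>] 0) (𝓝 (-l / (2 * w ^ 2))) :=
  semicircle_principal_value_general w l hl
end

section
/- Derivative formula for matrix exponential entries: for an n×n real symmetric matrix M, U(t) = e^{itM}, and the partial derivative D_{jk} = ∂/∂M_{jk} (treating M_{jk} = M_{kj} as a single variable for j ≠ k), one has D_{jk} U_{ab}(t) = i β_{jk} [(U_{aj} ∗ U_{bk})(t) + (U_{bj} ∗ U_{ak})(t)], where β_{jk} = (1 + δ_{jk})^{-1} and (f∗g)(t) = ∫₀ᵗ f(t−s)g(s) ds. -/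
open MeasureTheory intervalIntegral

/-- `U(t) = e^{itM}` for a real matrix `M`, as a complex matrix. -/
noncomputable def Ut {n : ℕ} (M : Matrix (Fin n) (Fin n) ℝ) (t : ℝ) :
    Matrix (Fin n) (Fin n) ℂ :=
  NormedSpace.exp ((Complex.I * t) • M.map Complex.ofReal)

/-- The direction matrix of the derivative `D_{jk} = ∂/∂M_{jk}`, treating
`M_{jk} = M_{kj}` as a single variable for `j ≠ k`. -/
noncomputable def symmDir {n : ℕ} (j k : Fin n) : Matrix (Fin n) (Fin n) ℝ :=
  Matrix.single j k 1 + if j = k then 0 else Matrix.single k j 1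

/-!
Duhamel's formula `e^Y - e^X = ∫₀¹ e^{sY} (Y - X) e^{(1-s)X} ds`, obtained by integrating the
derivative of `s ↦ e^{sY} e^{(1-s)X}`, writes `e^{A + xB} - e^A = x G(x)` with `G` continuous and
`G(0) = ∫₀¹ e^{sA} B e^{(1-s)A} ds`, which is therefore the derivative at `x = 0`. Rescaling
`s ↦ s t`, the derivative of `x ↦ e^{t(A + xB)}` is `∫₀ᵗ e^{sA} B e^{(t-s)A} ds`.
For `A = iM` and `B = i(E_{jk} + E_{kj})` (`B = i E_{jj}` when `j = k`) the `(a, b)` entry of the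
integrand is `i (U_{aj}(s) U_{kb}(t-s) + U_{ak}(s) U_{jb}(t-s))`, resp. its first term. Symmetry of
`U = e^{itM}` and commutativity of `∗` turn this into the formula; when `j = k` the single term
equals both convolutions of the formula, hence `β_{jj} = 1/2`.
-/

open NormedSpace

section Duhamel

variable {𝔸 : Type*} [NormedRing 𝔸] [NormedAlgebra ℝ 𝔸] [CompleteSpace 𝔸]

@[fun_prop]
theorem exp_continuous_of_real : Continuous (exp : 𝔸 → 𝔸) := by
  let +nondep : NormedAlgebra ℚ 𝔸 := .restrictScalars ℚ ℝ 𝔸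
  exact exp_continuous

theorem hasDerivAt_exp_smul_mul_exp_one_sub_smul (X Y : 𝔸) (s : ℝ) :
    HasDerivAt (fun u : ℝ => exp (u • Y) * exp ((1 - u) • X))
      (exp (s • Y) * (Y - X) * exp ((1 - s) • X)) s := by
  have hX : HasDerivAt (fun u : ℝ => exp ((1 - u) • X)) (-(X * exp ((1 - s) • X))) s := by
    simpa [Function.comp_def] using
      (hasDerivAt_exp_smul_const' X (1 - s)).scomp s ((hasDerivAt_id s).const_sub 1)
  exact ((hasDerivAt_exp_smul_const Y s).mul hX).congr_deriv (by noncomm_ring)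

theorem exp_sub_exp_eq_integral (X Y : 𝔸) :
    exp Y - exp X = ∫ s in (0:ℝ)..1, exp (s • Y) * (Y - X) * exp ((1 - s) • X) := by
  have hcont : Continuous fun s : ℝ => exp (s • Y) * (Y - X) * exp ((1 - s) • X) := by
    fun_prop
  rw [integral_eq_sub_of_hasDerivAt (fun s _ => hasDerivAt_exp_smul_mul_exp_one_sub_smul X Y s)
    (hcont.intervalIntegrable 0 1)]
  simp

theorem exp_add_smul_sub_exp (A B : 𝔸) (x : ℝ) :
    exp (A + x • B) - exp A =
      x • ∫ s in (0:ℝ)..1, exp (s • (A + x • B)) * B * exp ((1 - s) • A) := by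
  rw [exp_sub_exp_eq_integral, ← intervalIntegral.integral_smul]
  simp only [add_sub_cancel_left, mul_smul_comm, smul_mul_assoc]

theorem hasDerivAt_exp_add_smul (A B : 𝔸) :
    HasDerivAt (fun x : ℝ => exp (A + x • B))
      (∫ s in (0:ℝ)..1, exp (s • A) * B * exp ((1 - s) • A)) 0 := by
  set G : ℝ → 𝔸 := fun x => ∫ s in (0:ℝ)..1, exp (s • (A + x • B)) * B * exp ((1 - s) • A)
  have hG : Continuous G := by
    apply continuous_parametric_intervalIntegral_of_continuous'
    fun_prop
  have hslope : ∀ x ≠ 0, slope (fun x : ℝ => exp (A + x • B)) 0 x = G x := by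
    intro x hx
    rw [slope_def_module, sub_zero, zero_smul, add_zero, exp_add_smul_sub_exp, smul_smul,
      inv_mul_cancel₀ hx, one_smul]
  have hG0 : G 0 = ∫ s in (0:ℝ)..1, exp (s • A) * B * exp ((1 - s) • A) := by simp [G]
  rw [hasDerivAt_iff_tendsto_slope, ← hG0]
  refine ((hG.tendsto 0).mono_left nhdsWithin_le_nhds).congr' ?_
  filter_upwards [self_mem_nhdsWithin] with x hx using (hslope x hx).symm

theorem hasDerivAt_exp_smul_add_smul (A B : 𝔸) (t : ℝ) :
    HasDerivAt (fun x : ℝ => exp (t • (A + x • B)))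
      (∫ s in (0:ℝ)..t, exp (s • A) * B * exp ((t - s) • A)) 0 := by
  simp only [smul_add, smul_comm t]
  convert hasDerivAt_exp_add_smul (t • A) (t • B) using 1
  calc ∫ s in (0:ℝ)..t, exp (s • A) * B * exp ((t - s) • A)
      = ∫ s in 0 * t..1 * t, exp (s • A) * B * exp ((t - s) • A) := by simp
    _ = t • ∫ s in (0:ℝ)..1, exp ((s * t) • A) * B * exp ((t - s * t) • A) :=
      (smul_integral_comp_mul_right _ t).symm
    _ = _ := by
      rw [← intervalIntegral.integral_smul]
      refine integral_congr fun s _ => ?_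
      simp only [smul_smul, mul_smul_comm, smul_mul_assoc, one_sub_mul]

end Duhamel

theorem integral_comp_sub_left_mul (f g : ℝ → ℂ) (t : ℝ) :
    ∫ s in (0:ℝ)..t, f (t - s) * g s = ∫ s in (0:ℝ)..t, f s * g (t - s) := by
  simpa using integral_comp_sub_left (fun s => f s * g (t - s)) t (a := 0) (b := t)

theorem Matrix.mul_single_mul_apply {n R : Type*} [Fintype n] [DecidableEq n] [Semiring R]
    (P Q : Matrix n n R) (j k a b : n) (c : R) :
    (P * Matrix.single j k c * Q) a b = P a j * c * Q k b := by
  rw [Matrix.mul_apply, Finset.sum_eq_single k (fun x _ hx => by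
    rw [Matrix.mul_single_apply_of_ne _ _ _ _ _ hx, zero_mul]) (by simp),
    Matrix.mul_single_apply_same]

theorem Ut_apply_comm {n : ℕ} {M : Matrix (Fin n) (Fin n) ℝ} (hM : M.IsSymm) (t : ℝ) (a b : Fin n) :
    Ut M t a b = Ut M t b a := by
  have : ((Complex.I * t) • M.map Complex.ofReal).IsSymm := by
    rw [Matrix.IsSymm, Matrix.transpose_smul, ← Matrix.transpose_map, hM]
  exact (Matrix.IsSymm.exp this).apply b a

theorem mul_symmDir_map_mul_apply {n : ℕ} (P Q : Matrix (Fin n) (Fin n) ℂ) (j k a b : Fin n) :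
    (P * (symmDir j k).map Complex.ofReal * Q) a b =
      P a j * Q k b + if j = k then 0 else P a k * Q j b := by
  have hsingle (p q : Fin n) :
      (Matrix.single p q (1 : ℝ)).map Complex.ofReal = Matrix.single p q 1 :=
    Matrix.map_single p q 1 Complex.ofRealHom |>.trans (by simp)
  by_cases h : j = k <;>
    simp [symmDir, h, hsingle, Matrix.map_add, Matrix.mul_add, Matrix.add_mul,
      Matrix.mul_single_mul_apply]

section MatrixNorm

-- Any algebra norm would do: neither `exp` nor derivatives into a finite-dimensional space see it.
attribute [local instance] Matrix.linftyOpNormedRing Matrix.linftyOpNormedAlgebra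

variable {n : ℕ}

theorem Ut_eq_exp_smul (M : Matrix (Fin n) (Fin n) ℝ) (t : ℝ) :
    Ut M t = exp (t • (Complex.I • M.map Complex.ofReal)) := by
  rw [Ut, mul_comm, mul_smul, Complex.coe_smul]

theorem continuous_Ut (M : Matrix (Fin n) (Fin n) ℝ) : Continuous (Ut M) := by
  rw [show Ut M = _ from funext (Ut_eq_exp_smul M)]
  fun_prop

theorem hasDerivAt_Ut_add_smul (M S : Matrix (Fin n) (Fin n) ℝ) (t : ℝ) :
    HasDerivAt (fun x : ℝ => Ut (M + x • S) t)
      (∫ s in (0:ℝ)..t, Ut M s * (Complex.I • S.map Complex.ofReal) * Ut M (t - s)) 0 := by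
  have hmap (x : ℝ) : (M + x • S).map Complex.ofReal =
      M.map Complex.ofReal + x • S.map Complex.ofReal := by
    ext; simp
  simp only [Ut_eq_exp_smul, hmap, smul_add Complex.I, smul_comm Complex.I]
  exact hasDerivAt_exp_smul_add_smul _ _ t

theorem hasDerivAt_Ut_add_smul_apply (M S : Matrix (Fin n) (Fin n) ℝ) (t : ℝ) (a b : Fin n) :
    HasDerivAt (fun x : ℝ => Ut (M + x • S) t a b)
      (∫ s in (0:ℝ)..t, (Ut M s * (Complex.I • S.map Complex.ofReal) * Ut M (t - s)) a b) 0 := by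
  let L : Matrix (Fin n) (Fin n) ℂ →L[ℝ] ℂ :=
    (Matrix.entryLinearMap ℝ ℂ a b).toContinuousLinearMap
  have hcont := continuous_Ut M
  have hD := L.hasFDerivAt.comp_hasDerivAt 0 (hasDerivAt_Ut_add_smul M S t)
  rwa [← L.intervalIntegral_comp_comm (Continuous.intervalIntegrable (by fun_prop) 0 t)] at hD

end MatrixNorm

/-- Derivative formula for matrix exponential entries:
`D_{jk} U_{ab}(t) = i β_{jk} [(U_{aj} ∗ U_{bk})(t) + (U_{bj} ∗ U_{ak})(t)]`
with `β_{jk} = (1 + δ_{jk})^{-1}` and `(f∗g)(t) = ∫₀ᵗ f(t−s)g(s) ds`. -/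
theorem deriv_exp_entry_symm {n : ℕ} (M : Matrix (Fin n) (Fin n) ℝ) (hM : M.IsSymm)
    (j k a b : Fin n) (t : ℝ) :
    HasDerivAt (fun x : ℝ => Ut (M + x • symmDir j k) t a b)
      (Complex.I * (if j = k then (2 : ℂ)⁻¹ else 1) *
        ((∫ s in (0:ℝ)..t, Ut M (t - s) a j * Ut M s b k) +
          ∫ s in (0:ℝ)..t, Ut M (t - s) b j * Ut M s a k)) 0 := by
  have hD := hasDerivAt_Ut_add_smul_apply M (symmDir j k) t a b
  simp only [mul_smul_comm, smul_mul_assoc, Matrix.smul_apply, smul_eq_mul,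
    mul_symmDir_map_mul_apply, Ut_apply_comm hM _ k b, Ut_apply_comm hM _ j b] at hD
  refine hD.congr_deriv ?_
  have hreflect : ∫ s in (0:ℝ)..t, Ut M (t - s) a j * Ut M s b k =
      ∫ s in (0:ℝ)..t, Ut M s a j * Ut M (t - s) b k :=
    integral_comp_sub_left_mul (fun s => Ut M s a j) (fun s => Ut M s b k) t
  have hcomm : ∫ s in (0:ℝ)..t, Ut M (t - s) b j * Ut M s a k =
      ∫ s in (0:ℝ)..t, Ut M s a k * Ut M (t - s) b j :=
    integral_congr fun s _ => mul_comm _ _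
  rw [hreflect, hcomm, intervalIntegral.integral_const_mul]
  rcases eq_or_ne j k with rfl | hjk
  · simp only [if_true, add_zero]
    ring
  · have hcont := continuous_Ut M
    simp only [if_neg hjk, mul_one]
    rw [integral_add (Continuous.intervalIntegrable (by fun_prop) 0 t)
      (Continuous.intervalIntegrable (by fun_prop) 0 t)]
end
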